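/- arXiv:1902.04375 — 4 statements merged into one kernel-verified Lean document; each statement's English description precedes it below -/
import Mathlib

section
/- Subgradient Newton step decreases to root: let t : ℝ → ℝ be convex, continuous, strictly decreasing on the interval of interest, with t(λ⁰) > 0 at the starting point λ⁰ and a root λ* > λ⁰ (t(λ*) = 0). If g < 0 is a subgradient of t at λ⁰, then the Newton iterate λ¹ = λ⁰ - t(λ⁰)/g satisfies λ⁰ < λ¹ ≤ λ*, and t(λ¹) ≥ 0. -/
/-! The subgradient inequality says that the affine function `ℓ μ = t λ⁰ + g (μ - λ⁰)` lies
below `t`, and the Newton iterate `λ¹` is exactly the root of `ℓ`. Hence `t λ¹ ≥ ℓ λ¹ = 0`,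
and since `ℓ` is strictly decreasing with `ℓ λ* ≤ t λ* = 0 = ℓ λ¹`, also `λ¹ ≤ λ*`. -/

theorem affine_newtonStep_eq_zero {𝕜 : Type*} [Field 𝕜] {a g x : 𝕜} (hg : g ≠ 0) :
    a + g * ((x - a / g) - x) = 0 := by
  field_simp
  ring

theorem nonneg_at_newtonStep {𝕜 : Type*} [Field 𝕜] [LE 𝕜] {t : 𝕜 → 𝕜} {x g : 𝕜}
    (hsub : ∀ μ, t x + g * (μ - x) ≤ t μ) (hg : g ≠ 0) : 0 ≤ t (x - t x / g) := by
  simpa only [affine_newtonStep_eq_zero hg] using hsub (x - t x / g)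

section NewtonStep

variable {𝕜 : Type*} [Field 𝕜] [LinearOrder 𝕜] [IsStrictOrderedRing 𝕜]

theorem lt_newtonStep {a g x : 𝕜} (ha : 0 < a) (hg : g < 0) : x < x - a / g := by
  linarith [div_neg_of_pos_of_neg ha hg]

theorem newtonStep_le_of_root {t : 𝕜 → 𝕜} {x g r : 𝕜}
    (hsub : ∀ μ, t x + g * (μ - x) ≤ t μ) (hg : g < 0) (hr : t r = 0) : x - t x / g ≤ r := by
  have hℓ : t x + g * (r - x) ≤ t x + g * ((x - t x / g) - x) := by
    rw [affine_newtonStep_eq_zero hg.ne, ← hr]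
    exact hsub r
  have := (mul_le_mul_left_of_neg hg).mp (le_of_add_le_add_left hℓ)
  linarith

end NewtonStep

theorem stmt_7_general (t : ℝ → ℝ) (lam0 lamStar g : ℝ)
    (hsub : ∀ μ : ℝ, t lam0 + g * (μ - lam0) ≤ t μ)
    (hg : g < 0) (ht0 : 0 < t lam0)
    (hroot : t lamStar = 0) :
    lam0 < lam0 - t lam0 / g ∧ lam0 - t lam0 / g ≤ lamStar ∧
    0 ≤ t (lam0 - t lam0 / g) :=
  ⟨lt_newtonStep ht0 hg, newtonStep_le_of_root hsub hg hroot, nonneg_at_newtonStep hsub hg.ne⟩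

/-- Subgradient Newton step: if t is convex, continuous and strictly decreasing
on [λ⁰, λ*], with t(λ⁰) > 0, root λ* > λ⁰, and g < 0 a subgradient of t at λ⁰,
then the Newton iterate λ¹ = λ⁰ - t(λ⁰)/g satisfies λ⁰ < λ¹ ≤ λ* and t(λ¹) ≥ 0. -/
theorem stmt_7 (t : ℝ → ℝ) (lam0 lamStar g : ℝ)
    (hconv : ConvexOn ℝ Set.univ t) (hcont : Continuous t)
    (hstrict : StrictAntiOn t (Set.Icc lam0 lamStar))
    (hsub : ∀ μ : ℝ, t lam0 + g * (μ - lam0) ≤ t μ)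
    (hg : g < 0) (ht0 : 0 < t lam0)
    (hlt : lam0 < lamStar) (hroot : t lamStar = 0) :
    lam0 < lam0 - t lam0 / g ∧ lam0 - t lam0 / g ≤ lamStar ∧
    0 ≤ t (lam0 - t lam0 / g) :=
  stmt_7_general t lam0 lamStar g hsub hg ht0 hroot
end

section
/- If (ŷ, v̂) is an optimal solution of the LP min{d^T y - v^T k' : B y - K_ψ^T v ≥ b, K_s^T v ≤ 𝟙, y,v ≥ 0} with optimal value 𝔒, and (ψ̂, û, ŵ) is feasible for max{ψ^T p + u^T q - 𝔒 w : B^T ψ + G^T u ≤ d w + c, ψ,u,w ≥ 0}, then the point (ψ̂, û, ŵ, ŵ ŷ, ŵ v̂) is feasible for the combined LP max{ψ^T p + u^T q - (d^T y - v^T k') : B y - K_ψ^T v ≥ b w, B^T ψ + G^T u ≤ d w + c, K_s^T v ≤ 𝟙 w, ψ,u,w,y,v ≥ 0} and achieves the same objective value as (ψ̂, û, ŵ) does in its problem. -/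
/-! The constraints of the combined problem that involve `y` and `v` are those of the first
subproblem with their right-hand sides multiplied by `w`, so they are positively homogeneous
in `(y, v, w)`: scaling the optimal `(ŷ, v̂)` by `ŵ ≥ 0` keeps it feasible and scales its value
`𝔒` to `ŵ 𝔒`. -/

open Matrix

section Homogeneity

variable {R ι κ μ : Type*} [CommRing R] [PartialOrder R] [IsOrderedRing R]
  [Fintype κ] [Fintype μ]

theorem smul_le_mulVec_smul_sub_mulVec_smul {A : Matrix ι κ R} {K : Matrix ι μ R}
    {b : ι → R} {y : κ → R} {v : μ → R} {w : R} (hw : 0 ≤ w)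
    (h : b ≤ A *ᵥ y - K *ᵥ v) : w • b ≤ A *ᵥ (w • y) - K *ᵥ (w • v) := by
  rw [mulVec_smul, mulVec_smul, ← smul_sub]
  exact smul_le_smul_of_nonneg_left h hw

theorem mulVec_smul_le_smul {A : Matrix ι κ R} {v : κ → R} {b : ι → R} {w : R}
    (hw : 0 ≤ w) (h : A *ᵥ v ≤ b) : A *ᵥ (w • v) ≤ w • b := by
  rw [mulVec_smul]
  exact smul_le_smul_of_nonneg_left h hw

end Homogeneity

theorem dotProduct_smul_sub_smul_dotProduct {R κ μ : Type*} [CommRing R] [Fintype κ]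
    [Fintype μ] (w : R) (d y : κ → R) (v k : μ → R) :
    d ⬝ᵥ (w • y) - (w • v) ⬝ᵥ k = w * (d ⬝ᵥ y - v ⬝ᵥ k) := by
  rw [dotProduct_smul, smul_dotProduct, smul_eq_mul, smul_eq_mul, mul_sub]

theorem stmt_8_general {m n n2 pp qq : ℕ}
    (B : Matrix (Fin m) (Fin n) ℝ) (G : Matrix (Fin n2) (Fin n) ℝ)
    (Kψ : Matrix (Fin pp) (Fin m) ℝ) (Ks : Matrix (Fin pp) (Fin qq) ℝ)
    (b : Fin m → ℝ) (c d : Fin n → ℝ) (p : Fin m → ℝ) (q : Fin n2 → ℝ)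
    (k' : Fin pp → ℝ) (one : Fin qq → ℝ)
    (yHat : Fin n → ℝ) (vHat : Fin pp → ℝ) (𝔒 : ℝ)
    (ψHat : Fin m → ℝ) (uHat : Fin n2 → ℝ) (wHat : ℝ)
    -- (ŷ, v̂) optimal for the first subproblem with value 𝔒
    (hy1 : b ≤ B *ᵥ yHat - Kψ.transpose *ᵥ vHat)
    (hy2 : Ks.transpose *ᵥ vHat ≤ one)
    (hy3 : 0 ≤ yHat) (hy4 : 0 ≤ vHat)
    (hOval : d ⬝ᵥ yHat - vHat ⬝ᵥ k' = 𝔒)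
    -- (ψ̂, û, ŵ) feasible for the second subproblem
    (hψ1 : B.transpose *ᵥ ψHat + G.transpose *ᵥ uHat ≤ wHat • d + c)
    (hψ2 : 0 ≤ ψHat) (hψ3 : 0 ≤ uHat) (hψ4 : 0 ≤ wHat) :
    -- feasibility of (ψ̂, û, ŵ, ŵŷ, ŵv̂) in the combined problem
    (wHat • b ≤ B *ᵥ (wHat • yHat) - Kψ.transpose *ᵥ (wHat • vHat) ∧
      B.transpose *ᵥ ψHat + G.transpose *ᵥ uHat ≤ wHat • d + c ∧
      Ks.transpose *ᵥ (wHat • vHat) ≤ wHat • one ∧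
      0 ≤ ψHat ∧ 0 ≤ uHat ∧ 0 ≤ wHat ∧ 0 ≤ wHat • yHat ∧ 0 ≤ wHat • vHat) ∧
    -- value preservation
    ψHat ⬝ᵥ p + uHat ⬝ᵥ q - (d ⬝ᵥ (wHat • yHat) - (wHat • vHat) ⬝ᵥ k')
      = ψHat ⬝ᵥ p + uHat ⬝ᵥ q - 𝔒 * wHat := by
  refine ⟨⟨smul_le_mulVec_smul_sub_mulVec_smul hψ4 hy1, hψ1, mulVec_smul_le_smul hψ4 hy2,
    hψ2, hψ3, hψ4, smul_nonneg hψ4 hy3, smul_nonneg hψ4 hy4⟩, ?_⟩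
  rw [dotProduct_smul_sub_smul_dotProduct, hOval, mul_comm]

/-- Combining subproblem solutions: if (ŷ, v̂) is optimal for the first
subproblem with value 𝔒 = dᵀŷ - v̂ᵀk', and (ψ̂, û, ŵ) is feasible for the
second subproblem, then (ψ̂, û, ŵ, ŵŷ, ŵv̂) is feasible for the combined
Benders subproblem and achieves the same objective value. -/
theorem stmt_8 {m n n2 pp qq : ℕ}
    (B : Matrix (Fin m) (Fin n) ℝ) (G : Matrix (Fin n2) (Fin n) ℝ)
    (Kψ : Matrix (Fin pp) (Fin m) ℝ) (Ks : Matrix (Fin pp) (Fin qq) ℝ)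
    (b : Fin m → ℝ) (c d : Fin n → ℝ) (p : Fin m → ℝ) (q : Fin n2 → ℝ)
    (k' : Fin pp → ℝ) (one : Fin qq → ℝ)
    (yHat : Fin n → ℝ) (vHat : Fin pp → ℝ) (𝔒 : ℝ)
    (ψHat : Fin m → ℝ) (uHat : Fin n2 → ℝ) (wHat : ℝ)
    -- (ŷ, v̂) optimal for the first subproblem with value 𝔒
    (hy1 : b ≤ B *ᵥ yHat - Kψ.transpose *ᵥ vHat)
    (hy2 : Ks.transpose *ᵥ vHat ≤ one)
    (hy3 : 0 ≤ yHat) (hy4 : 0 ≤ vHat)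
    (hOval : d ⬝ᵥ yHat - vHat ⬝ᵥ k' = 𝔒)
    (hyopt : ∀ (y : Fin n → ℝ) (v : Fin pp → ℝ),
      b ≤ B *ᵥ y - Kψ.transpose *ᵥ v → Ks.transpose *ᵥ v ≤ one → 0 ≤ y → 0 ≤ v →
      𝔒 ≤ d ⬝ᵥ y - v ⬝ᵥ k')
    -- (ψ̂, û, ŵ) feasible for the second subproblem
    (hψ1 : B.transpose *ᵥ ψHat + G.transpose *ᵥ uHat ≤ wHat • d + c)
    (hψ2 : 0 ≤ ψHat) (hψ3 : 0 ≤ uHat) (hψ4 : 0 ≤ wHat) :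
    -- feasibility of (ψ̂, û, ŵ, ŵŷ, ŵv̂) in the combined problem
    (wHat • b ≤ B *ᵥ (wHat • yHat) - Kψ.transpose *ᵥ (wHat • vHat) ∧
      B.transpose *ᵥ ψHat + G.transpose *ᵥ uHat ≤ wHat • d + c ∧
      Ks.transpose *ᵥ (wHat • vHat) ≤ wHat • one ∧
      0 ≤ ψHat ∧ 0 ≤ uHat ∧ 0 ≤ wHat ∧ 0 ≤ wHat • yHat ∧ 0 ≤ wHat • vHat) ∧
    -- value preservation
    ψHat ⬝ᵥ p + uHat ⬝ᵥ q - (d ⬝ᵥ (wHat • yHat) - (wHat • vHat) ⬝ᵥ k')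
      = ψHat ⬝ᵥ p + uHat ⬝ᵥ q - 𝔒 * wHat :=
  stmt_8_general B G Kψ Ks b c d p q k' one yHat vHat 𝔒 ψHat uHat wHat hy1 hy2 hy3 hy4 hOval hψ1 hψ2
    hψ3 hψ4
end

section
/- In the special case d = c (Corollary on sequence-independent decomposition): for the problem max{ψ^T p + u^T q - 𝔒 w : B^T ψ + G^T u ≤ c(w + 1), ψ,u,w ≥ 0}, if the restricted problem with w = 0, namely max{ψ^T p + u^T q : B^T ψ + G^T u ≤ c, ψ,u ≥ 0}, has a finite optimum 𝔒' attained at (ψ̂, û) with 𝔒' > 𝔒, then the unrestricted problem is unbounded: (ψ̂, û, 1) is an unbounded ray direction after the substitution (ψ,u) = ((w+1)ψ', (w+1)u'). -/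
/-!
Scaling the optimum `(ψ̂, û)` of the restricted problem by `w + 1` keeps it feasible for the
right-hand side `(w + 1) c` and gives objective value `(w + 1) 𝔒' - 𝔒 w = 𝔒' + w (𝔒' - 𝔒)`,
which is unbounded in `w ≥ 0` because `𝔒' > 𝔒`.
-/

open Matrix

theorem mulVec_add_mulVec_smul_le_smul {ι κ μ R : Type*} [Fintype ι] [Fintype μ]
    [CommSemiring R] [PartialOrder R] [IsOrderedRing R] {A : Matrix κ ι R} {C : Matrix κ μ R}
    {x : ι → R} {y : μ → R} {b : κ → R} (h : A *ᵥ x + C *ᵥ y ≤ b) {t : R} (ht : 0 ≤ t) :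
    A *ᵥ (t • x) + C *ᵥ (t • y) ≤ t • b := by
  rw [mulVec_smul, mulVec_smul, ← smul_add]
  exact smul_le_smul_of_nonneg_left h ht

theorem smul_dotProduct_add_smul_dotProduct {ι μ R : Type*} [Fintype ι] [Fintype μ]
    [CommSemiring R] (t : R) (x p : ι → R) (y q : μ → R) :
    (t • x) ⬝ᵥ p + (t • y) ⬝ᵥ q = t * (x ⬝ᵥ p + y ⬝ᵥ q) := by
  rw [smul_dotProduct, smul_dotProduct, smul_eq_mul, smul_eq_mul, mul_add]

theorem exists_nonneg_lt_add_mul {R : Type*} [Field R] [LinearOrder R] [IsStrictOrderedRing R]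
    [Archimedean R] (a : R) {d : R} (hd : 0 < d) (M : R) : ∃ w : R, 0 ≤ w ∧ M < a + w * d := by
  obtain ⟨n, hn⟩ := exists_nat_gt ((M - a) / d)
  refine ⟨n, n.cast_nonneg, ?_⟩
  have := (div_lt_iff₀ hd).mp hn
  linarith

theorem stmt_12_general {m n k : ℕ}
    (B : Matrix (Fin m) (Fin k) ℝ) (G : Matrix (Fin n) (Fin k) ℝ)
    (c : Fin k → ℝ) (p : Fin m → ℝ) (q : Fin n → ℝ) (𝔒 𝔒' : ℝ)
    (ψHat : Fin m → ℝ) (uHat : Fin n → ℝ)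
    (hfeas : B.transpose *ᵥ ψHat + G.transpose *ᵥ uHat ≤ c)
    (hψ : 0 ≤ ψHat) (hu : 0 ≤ uHat)
    (hval : ψHat ⬝ᵥ p + uHat ⬝ᵥ q = 𝔒')
    (hgt : 𝔒 < 𝔒') :
    ∀ M : ℝ, ∃ (ψ : Fin m → ℝ) (u : Fin n → ℝ) (w : ℝ),
      B.transpose *ᵥ ψ + G.transpose *ᵥ u ≤ (w + 1) • c ∧
      0 ≤ ψ ∧ 0 ≤ u ∧ 0 ≤ w ∧
      M < ψ ⬝ᵥ p + u ⬝ᵥ q - 𝔒 * w := by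
  intro M
  obtain ⟨w, hw, hM⟩ := exists_nonneg_lt_add_mul 𝔒' (sub_pos.mpr hgt) M
  have hw1 : (0 : ℝ) ≤ w + 1 := by linarith
  refine ⟨(w + 1) • ψHat, (w + 1) • uHat, w, mulVec_add_mulVec_smul_le_smul hfeas hw1,
    smul_nonneg hw1 hψ, smul_nonneg hw1 hu, hw, ?_⟩
  calc M < 𝔒' + w * (𝔒' - 𝔒) := hM
    _ = ((w + 1) • ψHat) ⬝ᵥ p + ((w + 1) • uHat) ⬝ᵥ q - 𝔒 * w := by
      rw [smul_dotProduct_add_smul_dotProduct, hval]; ring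

/-- Special case d = c: if the restricted problem (w = 0) has finite optimum
𝔒' attained at (ψ̂, û) and 𝔒' > 𝔒, then the problem
max{ψᵀp + uᵀq - 𝔒w : Bᵀψ + Gᵀu ≤ c(w+1), ψ,u,w ≥ 0} is unbounded. -/
theorem stmt_12 {m n k : ℕ}
    (B : Matrix (Fin m) (Fin k) ℝ) (G : Matrix (Fin n) (Fin k) ℝ)
    (c : Fin k → ℝ) (p : Fin m → ℝ) (q : Fin n → ℝ) (𝔒 𝔒' : ℝ)
    (ψHat : Fin m → ℝ) (uHat : Fin n → ℝ)
    (hfeas : B.transpose *ᵥ ψHat + G.transpose *ᵥ uHat ≤ c)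
    (hψ : 0 ≤ ψHat) (hu : 0 ≤ uHat)
    (hval : ψHat ⬝ᵥ p + uHat ⬝ᵥ q = 𝔒')
    (hopt : ∀ (ψ : Fin m → ℝ) (u : Fin n → ℝ),
      B.transpose *ᵥ ψ + G.transpose *ᵥ u ≤ c → 0 ≤ ψ → 0 ≤ u →
      ψ ⬝ᵥ p + u ⬝ᵥ q ≤ 𝔒')
    (hgt : 𝔒 < 𝔒') :
    ∀ M : ℝ, ∃ (ψ : Fin m → ℝ) (u : Fin n → ℝ) (w : ℝ),
      B.transpose *ᵥ ψ + G.transpose *ᵥ u ≤ (w + 1) • c ∧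
      0 ≤ ψ ∧ 0 ≤ u ∧ 0 ≤ w ∧
      M < ψ ⬝ᵥ p + u ⬝ᵥ q - 𝔒 * w :=
  stmt_12_general B G c p q 𝔒 𝔒' ψHat uHat hfeas hψ hu hval hgt
end

section
/- In the special case d = c with 𝔒' ≤ 𝔒: if the restricted problem max{ψ^T p + u^T q : B^T ψ + G^T u ≤ c, ψ,u ≥ 0} has finite optimal value 𝔒' ≤ 𝔒 attained at (ψ̂, û), then (ψ̂, û, 0) is optimal for max{ψ^T p + u^T q - 𝔒 w : B^T ψ + G^T u ≤ c w + c, ψ,u,w ≥ 0}, whose optimal value is 𝔒'. -/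
open Matrix

/-! Scaling a feasible point (ψ, u, w) of the homogenized problem by (w + 1)⁻¹ gives a feasible
point of the restricted problem, so ψᵀp + uᵀq ≤ (w + 1) 𝔒'. Hence the objective is at most
𝔒' + w (𝔒' - 𝔒) ≤ 𝔒'. -/

section Homogenization

variable {κ ι ι' : Type*} [Fintype ι] [Fintype ι']
  (A : Matrix κ ι ℝ) (C : Matrix κ ι' ℝ) (c : κ → ℝ) (p : ι → ℝ) (q : ι' → ℝ) (V : ℝ)

theorem mulVec_add_mulVec_inv_smul_le {t : ℝ} (ht : 0 < t) {ψ : ι → ℝ} {u : ι' → ℝ}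
    (h : A *ᵥ ψ + C *ᵥ u ≤ t • c) :
    A *ᵥ (t⁻¹ • ψ) + C *ᵥ (t⁻¹ • u) ≤ c := by
  calc A *ᵥ (t⁻¹ • ψ) + C *ᵥ (t⁻¹ • u) = t⁻¹ • (A *ᵥ ψ + C *ᵥ u) := by
        rw [mulVec_smul, mulVec_smul, smul_add]
    _ ≤ t⁻¹ • (t • c) := smul_le_smul_of_nonneg_left h (inv_nonneg.mpr ht.le)
    _ = c := inv_smul_smul₀ ht.ne' c

theorem dotProduct_add_le_mul_of_le_smul
    (hopt : ∀ (ψ : ι → ℝ) (u : ι' → ℝ), A *ᵥ ψ + C *ᵥ u ≤ c → 0 ≤ ψ → 0 ≤ u →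
      ψ ⬝ᵥ p + u ⬝ᵥ q ≤ V)
    {t : ℝ} (ht : 0 < t) {ψ : ι → ℝ} {u : ι' → ℝ}
    (h : A *ᵥ ψ + C *ᵥ u ≤ t • c) (hψ : 0 ≤ ψ) (hu : 0 ≤ u) :
    ψ ⬝ᵥ p + u ⬝ᵥ q ≤ t * V := by
  have hscaled := hopt (t⁻¹ • ψ) (t⁻¹ • u) (mulVec_add_mulVec_inv_smul_le A C c ht h)
    (smul_nonneg (inv_nonneg.mpr ht.le) hψ) (smul_nonneg (inv_nonneg.mpr ht.le) hu)
  rw [smul_dotProduct, smul_dotProduct, smul_eq_mul, smul_eq_mul, ← mul_add] at hscaled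
  rwa [inv_mul_le_iff₀ ht] at hscaled

end Homogenization

theorem stmt_13_general {m n k : ℕ}
    (B : Matrix (Fin m) (Fin k) ℝ) (G : Matrix (Fin n) (Fin k) ℝ)
    (c : Fin k → ℝ) (p : Fin m → ℝ) (q : Fin n → ℝ) (𝔒 𝔒' : ℝ)
    (ψHat : Fin m → ℝ) (uHat : Fin n → ℝ)
    (hfeas : B.transpose *ᵥ ψHat + G.transpose *ᵥ uHat ≤ c)
    (hval : ψHat ⬝ᵥ p + uHat ⬝ᵥ q = 𝔒')
    (hopt : ∀ (ψ : Fin m → ℝ) (u : Fin n → ℝ),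
      B.transpose *ᵥ ψ + G.transpose *ᵥ u ≤ c → 0 ≤ ψ → 0 ≤ u →
      ψ ⬝ᵥ p + u ⬝ᵥ q ≤ 𝔒')
    (hle : 𝔒' ≤ 𝔒) :
    -- (ψ̂, û, 0) is feasible with value 𝔒'
    (B.transpose *ᵥ ψHat + G.transpose *ᵥ uHat ≤ (0 : ℝ) • c + c ∧
      ψHat ⬝ᵥ p + uHat ⬝ᵥ q - 𝔒 * 0 = 𝔒') ∧
    -- and optimal
    (∀ (ψ : Fin m → ℝ) (u : Fin n → ℝ) (w : ℝ),
      B.transpose *ᵥ ψ + G.transpose *ᵥ u ≤ w • c + c → 0 ≤ ψ → 0 ≤ u → 0 ≤ w →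
      ψ ⬝ᵥ p + u ⬝ᵥ q - 𝔒 * w ≤ 𝔒') := by
  refine ⟨⟨by simpa using hfeas, by simpa using hval⟩, fun ψ u w hf hψ hu hw => ?_⟩
  have hw1 : (0 : ℝ) < w + 1 := by linarith
  have hbound : ψ ⬝ᵥ p + u ⬝ᵥ q ≤ (w + 1) * 𝔒' :=
    dotProduct_add_le_mul_of_le_smul Bᵀ Gᵀ c p q 𝔒' hopt hw1 (by rwa [add_smul, one_smul]) hψ hu
  nlinarith [mul_le_mul_of_nonneg_left hle hw]

/-- Special case d = c with 𝔒' ≤ 𝔒: if the restricted problem (w = 0) has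
finite optimum 𝔒' ≤ 𝔒 attained at (ψ̂, û), then (ψ̂, û, 0) is optimal for
max{ψᵀp + uᵀq - 𝔒w : Bᵀψ + Gᵀu ≤ cw + c, ψ,u,w ≥ 0}, with value 𝔒'. -/
theorem stmt_13 {m n k : ℕ}
    (B : Matrix (Fin m) (Fin k) ℝ) (G : Matrix (Fin n) (Fin k) ℝ)
    (c : Fin k → ℝ) (p : Fin m → ℝ) (q : Fin n → ℝ) (𝔒 𝔒' : ℝ)
    (ψHat : Fin m → ℝ) (uHat : Fin n → ℝ)
    (hfeas : B.transpose *ᵥ ψHat + G.transpose *ᵥ uHat ≤ c)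
    (hψ : 0 ≤ ψHat) (hu : 0 ≤ uHat)
    (hval : ψHat ⬝ᵥ p + uHat ⬝ᵥ q = 𝔒')
    (hopt : ∀ (ψ : Fin m → ℝ) (u : Fin n → ℝ),
      B.transpose *ᵥ ψ + G.transpose *ᵥ u ≤ c → 0 ≤ ψ → 0 ≤ u →
      ψ ⬝ᵥ p + u ⬝ᵥ q ≤ 𝔒')
    (hle : 𝔒' ≤ 𝔒) :
    -- (ψ̂, û, 0) is feasible with value 𝔒'
    (B.transpose *ᵥ ψHat + G.transpose *ᵥ uHat ≤ (0 : ℝ) • c + c ∧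
      ψHat ⬝ᵥ p + uHat ⬝ᵥ q - 𝔒 * 0 = 𝔒') ∧
    -- and optimal
    (∀ (ψ : Fin m → ℝ) (u : Fin n → ℝ) (w : ℝ),
      B.transpose *ᵥ ψ + G.transpose *ᵥ u ≤ w • c + c → 0 ≤ ψ → 0 ≤ u → 0 ≤ w →
      ψ ⬝ᵥ p + u ⬝ᵥ q - 𝔒 * w ≤ 𝔒') :=
  stmt_13_general B G c p q 𝔒 𝔒' ψHat uHat hfeas hval hopt hle
end
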